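/- arXiv:1703.01577 — 4 statements merged into one kernel-verified Lean document; each statement's English description precedes it below -/
import Mathlib

section
/- If a Δ⁰₂ set A obeys a cost function c (i.e., some computable approximation of A has finite total c-cost), then for every ε > 0 there is a computable approximation of A whose total c-cost is less than ε. -/
/-- A cost function: computable and nonnegative. -/
def IsCostFunction (c : ℕ → ℕ → ℚ) : Prop :=
  Computable₂ c ∧ ∀ x s, 0 ≤ c x s

/-- The cost of the change from stage `s-1` to stage `s`: `c x s` for the least
`x < s` that changes, and `0` if there is no such `x`. -/
def stageCost (c : ℕ → ℕ → ℚ) (A : ℕ → ℕ → Bool) (s : ℕ) : ℚ :=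
  if h : ∃ x, x < s ∧ A (s - 1) x ≠ A s x then c (Nat.find h) s else 0

/-- `A` is a computable approximation of the set `L`: a computable sequence of
finite sets converging pointwise to `L`. -/
def IsCompApprox (A : ℕ → ℕ → Bool) (L : ℕ → Bool) : Prop :=
  Computable₂ A ∧ (∀ s, Set.Finite {x | A s x = true}) ∧
    ∀ x, ∃ N, ∀ s, N ≤ s → A s x = L x

/-- The total cost of the approximation `A` is bounded by `q`. -/
def ObeysWith (c : ℕ → ℕ → ℚ) (A : ℕ → ℕ → Bool) (q : ℚ) : Prop :=
  ∀ n, ∑ s ∈ Finset.range n, stageCost c A s ≤ q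

/-- A (Δ⁰₂) set `L` obeys the cost function `c`. -/
def Obeys (c : ℕ → ℕ → ℚ) (L : ℕ → Bool) : Prop :=
  ∃ A, IsCompApprox A L ∧ ∃ q, ObeysWith c A q

/-- Monotonic: non-increasing in the main argument, zero for `x > s`,
non-decreasing in the stage. -/
def MonotonicCF (c : ℕ → ℕ → ℚ) : Prop :=
  (∀ x s, c (x + 1) s ≤ c x s) ∧ (∀ x s, s < x → c x s = 0) ∧
    ∀ x s, c x s ≤ c x (s + 1)

/-- The limit condition: `lim_x liminf_s c(x,s) = 0`. -/
def LimitCondition (c : ℕ → ℕ → ℚ) : Prop :=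
  ∀ e : ℕ, ∃ x0, ∀ x, x0 ≤ x → ∀ t, ∃ s, t ≤ s ∧ c x s ≤ ((2 : ℚ) ^ e)⁻¹

/-- `L` is computably enumerable. -/
def CEset (L : ℕ → Bool) : Prop :=
  ∃ f : ℕ →. Unit, Partrec f ∧ ∀ x, (f x).Dom ↔ L x = true

/-- If a Δ⁰₂ set `A` obeys a cost function `c`, then for every
`ε > 0` there is a computable approximation of `A` whose total `c`-cost is
less than `ε`. -/
theorem stmt0 (c : ℕ → ℕ → ℚ) (hc : IsCostFunction c) (A : ℕ → Bool)
    (hA : Obeys c A) :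
    ∀ ε : ℚ, 0 < ε → ∃ app : ℕ → ℕ → Bool, IsCompApprox app A ∧
      ∃ q : ℚ, q < ε ∧ ObeysWith c app q := by
  intro ε hε
  obtain ⟨B, hB, q, hq⟩ := hA
  have hε2 : 0 < ε / 2 := by linarith
  have hnn : ∀ s, 0 ≤ stageCost c B s := by
    intro s
    unfold stageCost
    split
    · exact hc.2 _ _
    · exact le_refl _
  set S : ℕ → ℚ := fun n => ∑ s ∈ Finset.range n, stageCost c B s with hS
  have hSmono : Monotone S := fun m n h =>
    Finset.sum_le_sum_of_subset_of_nonneg (Finset.range_subset_range.2 h)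
      (fun i _ _ => hnn i)
  have hSstep : ∀ m, S (m + 1) = S m + stageCost c B m := fun m =>
    Finset.sum_range_succ _ _
  have key : ∃ n0, ∀ n, S n - S n0 ≤ ε / 2 := by
    by_contra h
    push_neg at h
    choose g hg using h
    set f : ℕ → ℕ := fun k => Nat.rec 0 (fun _ prev => g prev) k with hfdef
    have hf : ∀ k : ℕ, S 0 + k * (ε / 2) ≤ S (f k) := by
      intro k
      induction k with
      | zero => simp only [Nat.cast_zero, zero_mul, add_zero]; exact le_rfl
      | succ k ih =>
        have h1 := hg (f k)
        have h2 : f (k + 1) = g (f k) := rfl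
        rw [h2]
        push_cast
        linarith
    obtain ⟨k, hk⟩ := exists_nat_gt ((q - S 0) / (ε / 2))
    have h3 := hf k
    have h4 : S (f k) ≤ q := hq (f k)
    have h5 : q - S 0 < (k : ℚ) * (ε / 2) := (div_lt_iff₀ hε2).mp hk
    linarith
  obtain ⟨n0, hn0⟩ := key
  refine ⟨fun s x => B (max s n0) x, ⟨?_, ?_, ?_⟩, ε / 2, by linarith, ?_⟩
  · exact hB.1.comp ((Primrec.nat_max.comp Primrec.fst (Primrec.const n0)).to_comp)
      Computable.snd
  · intro s
    exact hB.2.1 (max s n0)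
  · intro x
    obtain ⟨N, hN⟩ := hB.2.2 x
    exact ⟨N, fun s hs => hN _ (le_trans hs (le_max_left _ _))⟩
  · have happ0 : ∀ s, s ≤ n0 → stageCost c (fun s x => B (max s n0) x) s = 0 := by
      intro s hs
      unfold stageCost
      rw [dif_neg]
      push_neg
      intro x hx
      have e1 : max (s - 1) n0 = n0 := max_eq_right (by omega)
      have e2 : max s n0 = n0 := max_eq_right hs
      simp only [e1, e2, not_not]
    have happ1 : ∀ s, n0 < s →
        stageCost c (fun s x => B (max s n0) x) s = stageCost c B s := by
      intro s hs
      have e1 : max (s - 1) n0 = s - 1 := max_eq_left (by omega)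
      have e2 : max s n0 = s := max_eq_left hs.le
      simp only [stageCost, e1, e2]
    intro n
    have claim : ∀ m, (∑ s ∈ Finset.range m,
        stageCost c (fun s x => B (max s n0) x) s) ≤ S (max m n0) - S n0 := by
      intro m
      induction m with
      | zero => simp
      | succ m ih =>
        rw [Finset.sum_range_succ]
        by_cases hm : m ≤ n0
        · rw [happ0 m hm]
          have h6 : S (max m n0) ≤ S (max (m + 1) n0) :=
            hSmono (max_le_max (Nat.le_succ m) le_rfl)
          linarith
        · push_neg at hm
          rw [happ1 m hm]
          have e : max m n0 = m := max_eq_left hm.le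
          have e' : max (m + 1) n0 = m + 1 := max_eq_left (by omega)
          rw [e] at ih
          rw [e', hSstep m]
          linarith
    have h7 := hn0 (max n n0)
    calc (∑ s ∈ Finset.range n, stageCost c (fun s x => B (max s n0) x) s)
        ≤ S (max n n0) - S n0 := claim n
      _ ≤ ε / 2 := by linarith
end

section
/- If c is a monotonic cost function and A is a c.e. set obeying c via some computable approximation, then there is a computable enumeration (a computable approximation with B_s ⊆ B_{s+1}) of A that obeys c. -/
/-!
Let `A'` be an approximation of `A` obeying `c` and `E` a monotone enumeration of `A`. Since both
converge to `A`, we can computably choose stages `g 0 < g 1 < ⋯` such that `A' (g s)` and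
`E (g s)` agree on `[0, s]`, and enumerate `B s = E (g s) ∩ [0, s]`. A change of `B` at stage
`s + 1` at some `x ≤ s` is then a change of `A'` at `x` between the stages `g s` and `g (s + 1)`;
as `x ≤ s ≤ g s` and `c` is monotone, its cost is at most what `A'` pays at some stage in
`(g s, g (s + 1)]`. Hence the total cost of `B` is bounded by that of `A'`.
-/

open Filter

theorem Computable₂.decide_forall_lt {α : Type*} [Primcodable α] {f : α → ℕ → Bool}
    (hf : Computable₂ f) : Computable₂ fun a n => decide (∀ x < n, f a x = true) := by
  have hstep : Computable₂ fun (p : α × ℕ) (q : ℕ × Bool) => q.2 && f p.1 q.1 :=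
    Primrec.and.to_comp.comp₂ (Computable.snd.comp Computable.snd).to₂
      (hf.comp (Computable.fst.comp Computable.fst) (Computable.fst.comp Computable.snd)).to₂
  refine Computable₂.mk <| (Computable.nat_rec Computable.snd (Computable.const true) hstep).of_eq
    fun ⟨a, n⟩ => ?_
  induction n with
  | zero => simp
  | succ n ih => simp [ih, Nat.le_iff_lt_or_eq, or_imp, forall_and]

theorem Computable₂.decide_forall_le_eq {F G : ℕ → ℕ → Bool} (hF : Computable₂ F)
    (hG : Computable₂ G) : Computable₂ fun k t => decide (∀ x ≤ k, F t x = G t x) := by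
  have hbeq : Computable₂ fun t x => F t x == G t x := Primrec.beq.to_comp.comp₂ hF hG
  refine Computable₂.mk <| ((Computable₂.decide_forall_lt hbeq).comp Computable.snd
    (Computable.succ.comp Computable.fst)).of_eq fun _ => by simp

section IncreasingWitnesses

variable {P : ℕ → ℕ → Prop} [DecidableRel P] (hP : ∀ k, ∃ᶠ t in atTop, P k t)

def witnessFrom (k v : ℕ) : ℕ := Nat.find (frequently_atTop.1 (hP k) v)

def witnessSeq : ℕ → ℕ
  | 0 => witnessFrom hP 0 0
  | k + 1 => witnessFrom hP (k + 1) (witnessSeq k + 1)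

theorem witnessSeq_spec (k : ℕ) : P k (witnessSeq hP k) := by
  cases k <;> exact (Nat.find_spec (frequently_atTop.1 (hP _) _)).2

theorem strictMono_witnessSeq : StrictMono (witnessSeq hP) :=
  strictMono_nat_of_lt_succ fun k => (Nat.find_spec (frequently_atTop.1 (hP (k + 1)) _)).1

theorem computable_witnessSeq (hPc : Computable₂ fun k t => decide (P k t)) :
    Computable (witnessSeq hP) := by
  have hfrom : Computable₂ (witnessFrom hP) := by
    have hdec : Computable fun q : (ℕ × ℕ) × ℕ => decide (q.1.2 ≤ q.2 ∧ P q.1.1 q.2) :=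
      (Primrec.and.to_comp.comp (Primrec.nat_le.decide.to_comp.comp
        (Computable.snd.comp Computable.fst) Computable.snd)
        (hPc.comp (Computable.fst.comp Computable.fst) Computable.snd)).of_eq
        fun q => by simp
    exact Computable.find hdec.computablePred (fun q : ℕ × ℕ => frequently_atTop.1 (hP q.1) q.2)
  refine (Computable.nat_rec Computable.id (Computable.const (witnessFrom hP 0 0))
    (hfrom.comp (Computable.succ.comp (Computable.fst.comp Computable.snd))
      (Computable.succ.comp (Computable.snd.comp Computable.snd))).to₂).of_eq fun k => ?_
  induction k with
  | zero => rfl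
  | succ k ih => rw [witnessSeq, ← ih]; rfl

end IncreasingWitnesses

theorem CEset.exists_monotone_enumeration {L : ℕ → Bool} (hL : CEset L) :
    ∃ E : ℕ → ℕ → Bool, Computable₂ E ∧ (∀ x, Monotone (E · x)) ∧
      ∀ x, L x = true ↔ ∃ s, E s x = true := by
  obtain ⟨f, hf, hdom⟩ := hL
  obtain ⟨cd, hcd⟩ := Nat.Partrec.Code.exists_code.1 <|
    Partrec.nat_iff.1 (hf.map (Computable.const 0).to₂)
  refine ⟨fun s x => (cd.evaln s x).isSome, ?_, ?_, fun x => ?_⟩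
  · exact Primrec.to_comp <| Primrec.option_isSome.comp <| Nat.Partrec.Code.primrec_evaln.comp
      ((Primrec.fst.pair (Primrec.const cd)).pair Primrec.snd)
  · refine fun x s t hst => Bool.le_iff_imp.2 fun h => ?_
    obtain ⟨y, hy⟩ := Option.isSome_iff_exists.1 h
    exact Option.isSome_iff_exists.2 ⟨y, Nat.Partrec.Code.evaln_mono hst hy⟩
  · have : (cd.eval x).Dom ↔ L x = true := by simpa [hcd] using hdom x
    simp only [← this, Part.dom_iff_mem, Option.isSome_iff_exists, Nat.Partrec.Code.evaln_complete]
    exact exists_comm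

theorem eventually_forall_le_eq {F G : ℕ → ℕ → Bool} {L : ℕ → Bool}
    (hF : ∀ x, ∀ᶠ s in atTop, F s x = L x) (hG : ∀ x, ∀ᶠ s in atTop, G s x = L x) (k : ℕ) :
    ∀ᶠ t in atTop, ∀ x ≤ k, F t x = G t x :=
  (eventually_all_finite (Set.finite_Iic k)).2 fun x _ =>
    ((hF x).and (hG x)).mono fun _ h => h.1.trans h.2.symm

theorem eventually_eq_of_monotone_enumeration {E : ℕ → ℕ → Bool} {L : ℕ → Bool}
    (hmono : ∀ x, Monotone (E · x)) (hE : ∀ x, L x = true ↔ ∃ s, E s x = true) (x : ℕ) :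
    ∀ᶠ s in atTop, E s x = L x := by
  cases hL : L x
  · exact Eventually.of_forall fun s => Bool.eq_false_iff.2 fun h => by
      simpa [hL] using (hE x).2 ⟨s, h⟩
  · obtain ⟨s₀, hs₀⟩ := (hE x).1 hL
    exact eventually_atTop.2 ⟨s₀, fun s hs => Bool.le_iff_imp.1 (hmono x hs) hs₀⟩

theorem exists_mem_Ico_ne_succ {α : Type*} {f : ℕ → α} {a b : ℕ} (hab : a ≤ b) (h : f a ≠ f b) :
    ∃ w ∈ Finset.Ico a b, f w ≠ f (w + 1) := by
  by_contra! hconst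
  induction b, hab using Nat.le_induction with
  | base => exact h rfl
  | succ b hab ih =>
    refine ih (fun heq => h (heq.trans (hconst b (Finset.mem_Ico.2 ⟨hab, b.lt_succ_self⟩)))) ?_
    exact fun w hw => hconst w (Finset.Ico_subset_Ico_right b.le_succ hw)

section StageCost

variable {c : ℕ → ℕ → ℚ} {A B : ℕ → ℕ → Bool}

theorem stageCost_zero : stageCost c A 0 = 0 := by
  simp [stageCost]

theorem stageCost_nonneg (hc : ∀ x s, 0 ≤ c x s) (s : ℕ) : 0 ≤ stageCost c A s := by
  unfold stageCost
  split
  · exact hc _ _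
  · exact le_rfl

theorem le_stageCost_succ_of_ne (hanti : ∀ s, Antitone (c · s)) (hmono : ∀ x, Monotone (c x))
    {m s w : ℕ} (hmw : m ≤ w) (hsw : s ≤ w + 1) (h : A w m ≠ A (w + 1) m) :
    c m s ≤ stageCost c A (w + 1) := by
  have hm : m < w + 1 ∧ A (w + 1 - 1) m ≠ A (w + 1) m := ⟨Nat.lt_succ_of_le hmw, by simpa using h⟩
  rw [stageCost, dif_pos ⟨m, hm⟩]
  exact (hmono m hsw).trans (hanti _ (Nat.find_min' _ hm))

theorem le_sum_stageCost_of_ne (hc : ∀ x s, 0 ≤ c x s) (hanti : ∀ s, Antitone (c · s))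
    (hmono : ∀ x, Monotone (c x)) {m s a b : ℕ} (hab : a ≤ b) (hma : m ≤ a) (hsa : s ≤ a + 1)
    (h : A a m ≠ A b m) : c m s ≤ ∑ w ∈ Finset.Ico a b, stageCost c A (w + 1) := by
  obtain ⟨w, hw, hne⟩ := exists_mem_Ico_ne_succ (f := (A · m)) hab h
  have haw := (Finset.mem_Ico.1 hw).1
  exact (le_stageCost_succ_of_ne hanti hmono (hma.trans haw) (by omega) hne).trans
    (Finset.single_le_sum (fun w _ => stageCost_nonneg hc (w + 1)) hw)

theorem stageCost_succ_le_of_eq_on_stages (hc : ∀ x s, 0 ≤ c x s)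
    (hanti : ∀ s, Antitone (c · s)) (hmono : ∀ x, Monotone (c x)) {g : ℕ → ℕ} (hg : Monotone g)
    (hgs : ∀ s, s ≤ g s) (hB : ∀ s x, x ≤ s → B s x = A (g s) x) (s : ℕ) :
    stageCost c B (s + 1) ≤ ∑ w ∈ Finset.Ico (g s) (g (s + 1)), stageCost c A (w + 1) := by
  rw [stageCost]
  split
  case isTrue hchange =>
    obtain ⟨hlt, hne⟩ := Nat.find_spec hchange
    have hms : Nat.find hchange ≤ s := Nat.le_of_lt_succ hlt
    simp only [Nat.add_sub_cancel] at hne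
    rw [hB s _ hms, hB (s + 1) _ (hms.trans s.le_succ)] at hne
    exact le_sum_stageCost_of_ne hc hanti hmono (hg s.le_succ) (hms.trans (hgs s))
      (Nat.succ_le_succ (hgs s)) hne
  case isFalse => exact Finset.sum_nonneg fun w _ => stageCost_nonneg hc (w + 1)

theorem ObeysWith.of_eq_on_stages (hc : ∀ x s, 0 ≤ c x s)
    (hanti : ∀ s, Antitone (c · s)) (hmono : ∀ x, Monotone (c x)) {g : ℕ → ℕ} (hg : Monotone g)
    (hgs : ∀ s, s ≤ g s) (hB : ∀ s x, x ≤ s → B s x = A (g s) x) {q : ℚ}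
    (hA : ObeysWith c A q) : ObeysWith c B q := by
  set F : ℕ → ℚ := fun n => ∑ w ∈ Finset.range (g n), stageCost c A (w + 1)
  have hF0 : 0 ≤ F 0 := Finset.sum_nonneg fun w _ => stageCost_nonneg hc (w + 1)
  have hFq : ∀ n, F n ≤ q := fun n => by
    simpa [F, Finset.sum_range_succ', stageCost_zero] using hA (g n + 1)
  rintro (_ | n)
  · simpa using hA 0
  calc ∑ s ∈ Finset.range (n + 1), stageCost c B s
      = ∑ s ∈ Finset.range n, stageCost c B (s + 1) := by
        rw [Finset.sum_range_succ', stageCost_zero, add_zero]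
    _ ≤ ∑ s ∈ Finset.range n, (F (s + 1) - F s) := Finset.sum_le_sum fun s _ => by
        rw [← Finset.sum_Ico_eq_sub _ (hg s.le_succ)]
        exact stageCost_succ_le_of_eq_on_stages hc hanti hmono hg hgs hB s
    _ = F n - F 0 := Finset.sum_range_sub F n
    _ ≤ q := by linarith [hFq n]

end StageCost

section SampledApprox

variable {E : ℕ → ℕ → Bool} {g : ℕ → ℕ}

def sampledApprox (E : ℕ → ℕ → Bool) (g : ℕ → ℕ) (s x : ℕ) : Bool :=
  decide (x ≤ s) && E (g s) x

theorem sampledApprox_succ (hE : ∀ x, Monotone (E · x)) (hg : Monotone g) {s x : ℕ}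
    (h : sampledApprox E g s x = true) :
    sampledApprox E g (s + 1) x = true := by
  simp only [sampledApprox, Bool.and_eq_true, decide_eq_true_eq] at h ⊢
  exact ⟨h.1.trans s.le_succ, Bool.le_iff_imp.1 (hE x (hg s.le_succ)) h.2⟩

theorem isCompApprox_sampledApprox {L : ℕ → Bool} (hEc : Computable₂ E) (hgc : Computable g)
    (hg : Tendsto g atTop atTop) (hE : ∀ x, ∀ᶠ s in atTop, E s x = L x) :
    IsCompApprox (sampledApprox E g) L := by
  refine ⟨?_, fun s => (Set.finite_Iic s).subset fun x hx => ?_, fun x => ?_⟩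
  · exact Primrec.and.to_comp.comp₂ (Primrec.nat_le.decide.to_comp.comp₂ Computable.snd.to₂
      Computable.fst.to₂) (hEc.comp₂ (hgc.comp Computable.fst).to₂ Computable.snd.to₂)
  · simp only [Set.mem_ofPred_eq, sampledApprox, Bool.and_eq_true, decide_eq_true_eq] at hx
    exact hx.1
  · refine eventually_atTop.1 (((eventually_ge_atTop x).and (hg.eventually (hE x))).mono ?_)
    rintro s ⟨hxs, hs⟩
    simp [sampledApprox, hxs, hs]

end SampledApprox

/-- If `c` is a monotonic cost function and `A` is a c.e. set
obeying `c`, then some computable enumeration of `A` obeys `c`. -/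
theorem stmt2 (c : ℕ → ℕ → ℚ) (hc : IsCostFunction c) (hm : MonotonicCF c)
    (A : ℕ → Bool) (hce : CEset A) (hA : Obeys c A) :
    ∃ app : ℕ → ℕ → Bool, IsCompApprox app A ∧
      (∀ s x, app s x = true → app (s + 1) x = true) ∧
      ∃ q : ℚ, ObeysWith c app q := by
  obtain ⟨hanti, -, hmono⟩ := hm
  obtain ⟨A', ⟨hA'c, -, hA'lim⟩, q, hq⟩ := hA
  obtain ⟨E, hEc, hEmono, hEA⟩ := hce.exists_monotone_enumeration
  have hElim := eventually_eq_of_monotone_enumeration hEmono hEA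
  have hagree : ∀ k, ∃ᶠ t in atTop, ∀ x ≤ k, A' t x = E t x := fun k =>
    (eventually_forall_le_eq (fun x => eventually_atTop.2 (hA'lim x)) hElim k).frequently
  have hg := strictMono_witnessSeq hagree
  refine ⟨sampledApprox E (witnessSeq hagree),
    isCompApprox_sampledApprox hEc (computable_witnessSeq hagree
      (hA'c.decide_forall_le_eq hEc)) hg.tendsto_atTop hElim,
    fun s x => sampledApprox_succ hEmono hg.monotone, q, ?_⟩
  refine hq.of_eq_on_stages hc.2 (fun s => antitone_nat_of_succ_le (hanti · s))
    (fun x => monotone_nat_of_le_succ (hmono x)) hg.monotone hg.id_le fun s x hx => ?_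
  simp [sampledApprox, hx, witnessSeq_spec hagree s x hx]
end

section
/- There is a computable enumeration ⟨A_s⟩ of ℕ in which each A_s is an initial segment of ℕ (enumerating 0,1,2,... in order), such that the total cost of ⟨A_s⟩ with respect to the standard cost function c_K is infinite. -/
/-- Real-valued stage cost: cost of the change from stage `s-1` to stage `s`. -/
noncomputable def stageCostR (c : ℕ → ℕ → ℝ) (A : ℕ → ℕ → Bool) (s : ℕ) : ℝ :=
  if h : ∃ x, x < s ∧ A (s - 1) x ≠ A s x then c (Nat.find h) s else 0

/-- The standard cost function `c_K(x,s) = Σ_{w=x+1}^{s} 2^{-K_s(w)}`, where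
`K s w` is the stage-`s` prefix-free complexity of `w` (with the convention
`K_s(w) = ∞`, i.e. weight `0`, for `w ≥ s`). -/
noncomputable def cKs (K : ℕ → ℕ → ℕ) (x s : ℕ) : ℝ :=
  ∑ w ∈ Finset.Ico (x + 1) s, ((2 : ℝ)⁻¹) ^ K s w

/-!
Enumerate `0, 1, 2, …` in order, but let stage `s + 1` enumerate the next element `m` only when
the least power of two above `m`, `2 ^ j` with `j = log₂ m + 1`, is at most `s` and already satisfies
`K_{s+1}(2 ^ j) ≤ 2 log j + C`. Since `K_s` only decreases with `s`, the hypothesis on `K` makes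
every `m` enumerated eventually. As `m < 2 ^ j ≤ s`, the term `2 ^ (-K_{s+1}(2 ^ j))` occurs in
`c_K(m, s + 1)`, so the `2 ^ (j - 1)` numbers `m` with `log₂ m = j - 1` together cost at least
`2 ^ (j - 1 - 2 log j - C)`, which is unbounded in `j`.
-/

theorem Primrec.nat_pow : Primrec₂ ((· ^ ·) : ℕ → ℕ → ℕ) :=
  Primrec₂.unpaired'.1 Nat.Primrec.pow

theorem Nat.log_eq_findGreatest (b n : ℕ) :
    Nat.log b n = Nat.findGreatest (fun k => b ^ k ≤ n ∧ 1 < b) n := by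
  refine (Nat.findGreatest_eq_iff.2 ⟨Nat.log_le_self b n, fun h => ?_, fun k hk _ h => ?_⟩).symm
  · obtain ⟨hbn, hb⟩ := Nat.log_pos_iff.1 (Nat.pos_of_ne_zero h)
    exact ⟨Nat.pow_log_le_self b (by omega), hb⟩
  · exact (Nat.lt_pow_of_log_lt h.2 hk).not_ge h.1

theorem Primrec.nat_log : Primrec₂ Nat.log := by
  have hp : PrimrecRel fun (p : ℕ × ℕ) (k : ℕ) => p.1 ^ k ≤ p.2 ∧ 1 < p.1 :=
    (Primrec.nat_le.comp (Primrec.nat_pow.comp (Primrec.fst.comp Primrec.fst) Primrec.snd)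
      (Primrec.snd.comp Primrec.fst)).and
      (Primrec.nat_lt.comp (Primrec.const 1) (Primrec.fst.comp Primrec.fst))
  exact (Primrec.nat_findGreatest Primrec.snd hp).of_eq fun p => (Nat.log_eq_findGreatest _ _).symm

open Finset

theorem le_of_stage_le {K : ℕ → ℕ → ℕ} (hmono : ∀ s w, w < s → K (s + 1) w ≤ K s w)
    {w s t : ℕ} (hw : w < s) (hst : s ≤ t) : K t w ≤ K s w := by
  induction t, hst using Nat.le_induction with
  | base => exact le_rfl
  | succ t hst ih => exact (hmono t w (hw.trans_le hst)).trans ih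

theorem stageCostR_nonneg {c : ℕ → ℕ → ℝ} (hc : ∀ x s, 0 ≤ c x s) (A : ℕ → ℕ → Bool) (s : ℕ) :
    0 ≤ stageCostR c A s := by
  unfold stageCostR; split_ifs
  exacts [hc _ _, le_rfl]

theorem cKs_nonneg (K : ℕ → ℕ → ℕ) (x s : ℕ) : 0 ≤ cKs K x s :=
  sum_nonneg fun _ _ => by positivity

namespace SlowEnumeration

variable (K : ℕ → ℕ → ℕ) (f : ℕ → ℕ)

def Ready (s m : ℕ) : Prop :=
  2 ^ (Nat.log 2 m + 1) ≤ s ∧ K (s + 1) (2 ^ (Nat.log 2 m + 1)) ≤ f (Nat.log 2 m + 1)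

instance (s m : ℕ) : Decidable (Ready K f s m) := inferInstanceAs (Decidable (_ ∧ _))

def count : ℕ → ℕ
  | 0 => 0
  | s + 1 => if Ready K f s (count s) then count s + 1 else count s

def enumeration (s x : ℕ) : Bool := decide (x < count K f s)

noncomputable def weight (m : ℕ) : ℝ := 2⁻¹ ^ f (Nat.log 2 m + 1)

variable {K f}

theorem count_monotone : Monotone (count K f) :=
  monotone_nat_of_le_succ fun s => by rw [count]; split_ifs <;> omega

theorem exists_le_count (hmono : ∀ s w, w < s → K (s + 1) w ≤ K s w)
    (hf : ∀ j, ∃ s, 2 ^ j < s ∧ K s (2 ^ j) ≤ f j) (M : ℕ) : ∃ s, M ≤ count K f s := by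
  induction M with
  | zero => exact ⟨0, Nat.zero_le _⟩
  | succ M ih =>
    obtain ⟨s₀, hs₀⟩ := ih
    by_contra! hstuck
    have hconst : ∀ s, s₀ ≤ s → count K f s = M := fun s hs => by
      have := count_monotone (K := K) (f := f) hs; have := hstuck s; omega
    obtain ⟨s₁, hs₁, hK₁⟩ := hf (Nat.log 2 M + 1)
    set t := max s₀ s₁
    have hready : Ready K f t (count K f t) := by
      rw [hconst t (le_max_left _ _)]
      exact ⟨by omega, (le_of_stage_le hmono hs₁ (by omega)).trans hK₁⟩
    have := hconst (t + 1) (by omega)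
    rw [count, if_pos hready, hconst t (le_max_left _ _)] at this
    omega

theorem computable_count (hK : Computable₂ K) (hf : Computable f) : Computable (count K f) := by
  have hj : Computable fun p : ℕ × ℕ => Nat.log 2 p.2 + 1 :=
    Computable.succ.comp (Primrec.nat_log.to_comp.comp (Computable.const 2) Computable.snd)
  have hpow : Computable fun p : ℕ × ℕ => 2 ^ (Nat.log 2 p.2 + 1) :=
    Primrec.nat_pow.to_comp.comp (Computable.const 2) hj
  have hready : Computable fun p : ℕ × ℕ => decide (Ready K f p.1 p.2) := by
    refine (Primrec.and.to_comp.comp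
      (Primrec.nat_le.decide.to_comp.comp hpow Computable.fst)
      (Primrec.nat_le.decide.to_comp.comp (hK.comp (Computable.succ.comp Computable.fst) hpow)
        (hf.comp hj))).of_eq fun p => (Bool.decide_and _ _).symm
  have hstep : Computable fun p : ℕ × ℕ =>
      cond (decide (Ready K f p.1 p.2)) (p.2 + 1) p.2 :=
    Computable.cond hready (Computable.succ.comp Computable.snd) Computable.snd
  refine (Computable.nat_rec Computable.id (Computable.const 0)
    (hstep.comp Computable.snd).to₂).of_eq fun s => ?_
  induction s with
  | zero => rfl
  | succ s ih => simp only [id] at ih ⊢; rw [count, ← ih]; split_ifs with h <;> simp [h]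

theorem enumeration_succ_of_eq_true {s x : ℕ} (h : enumeration K f s x = true) :
    enumeration K f (s + 1) x = true := by
  simp only [enumeration, decide_eq_true_eq] at h ⊢
  exact h.trans_le (count_monotone s.le_succ)

theorem enumeration_eventually_true (hmono : ∀ s w, w < s → K (s + 1) w ≤ K s w)
    (hf : ∀ j, ∃ s, 2 ^ j < s ∧ K s (2 ^ j) ≤ f j) (x : ℕ) :
    ∃ N, ∀ s, N ≤ s → enumeration K f s x = true := by
  obtain ⟨N, hN⟩ := exists_le_count hmono hf (x + 1)
  exact ⟨N, fun s hs =>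
    decide_eq_true ((hN.trans_lt' x.lt_succ_self).trans_le (count_monotone hs))⟩

theorem computable_enumeration (hK : Computable₂ K) (hf : Computable f) :
    Computable₂ (enumeration K f) :=
  Primrec.nat_lt.decide.to_comp.comp Computable.snd ((computable_count hK hf).comp Computable.fst)

theorem weight_le_stageCostR {s : ℕ} (h : Ready K f s (count K f s)) :
    weight f (count K f s) ≤ stageCostR (cKs K) (enumeration K f) (s + 1) := by
  set m := count K f s
  have hcount : count K f (s + 1) = m + 1 := by rw [count, if_pos h]
  have hm : m < 2 ^ (Nat.log 2 m + 1) := Nat.lt_pow_succ_log_self one_lt_two m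
  have hdiff : m < s + 1 ∧ enumeration K f (s + 1 - 1) m ≠ enumeration K f (s + 1) m :=
    ⟨by have := h.1; omega, by simp [enumeration, hcount, m]⟩
  have hex : ∃ x, x < s + 1 ∧ enumeration K f (s + 1 - 1) x ≠ enumeration K f (s + 1) x :=
    ⟨m, hdiff⟩
  have hfind : Nat.find hex = m :=
    (Nat.find_eq_iff hex).2 ⟨hdiff, fun x hx => by simp [enumeration, hcount, m]; omega⟩
  rw [stageCostR, dif_pos hex, hfind, cKs]
  calc weight f m ≤ 2⁻¹ ^ K (s + 1) (2 ^ (Nat.log 2 m + 1)) :=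
        pow_le_pow_of_le_one (by norm_num) (by norm_num) h.2
    _ ≤ _ := single_le_sum (f := fun w => (2 : ℝ)⁻¹ ^ K (s + 1) w) (fun w _ => by positivity)
        (mem_Ico.2 ⟨hm, by have := h.1; omega⟩)

theorem sum_weight_le_sum_stageCostR (N : ℕ) :
    ∑ m ∈ range (count K f N), weight f m ≤
      ∑ s ∈ range (N + 1), stageCostR (cKs K) (enumeration K f) s := by
  have hcost := stageCostR_nonneg (cKs_nonneg K) (enumeration K f)
  induction N with
  | zero => simpa [count] using hcost 0
  | succ N ih =>
    rw [sum_range_succ _ (N + 1), count]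
    split_ifs with h
    · rw [sum_range_succ]
      exact add_le_add ih (weight_le_stageCostR h)
    · exact ih.trans (le_add_of_nonneg_right (hcost _))

theorem sum_weight_Ico_two_pow (i : ℕ) :
    ∑ m ∈ Ico (2 ^ i) (2 ^ (i + 1)), weight f m = 2 ^ i * 2⁻¹ ^ f (i + 1) := by
  have hlog : ∀ m ∈ Ico (2 ^ i) (2 ^ (i + 1)), weight f m = 2⁻¹ ^ f (i + 1) := fun m hm => by
    rw [mem_Ico] at hm
    rw [weight, Nat.log_eq_of_pow_le_of_lt_pow hm.1 hm.2]
  rw [sum_congr rfl hlog, sum_const, Nat.card_Ico, nsmul_eq_mul, pow_succ, Nat.mul_two,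
    Nat.add_sub_cancel]
  push_cast; ring

theorem sum_stageCostR_unbounded (hmono : ∀ s w, w < s → K (s + 1) w ≤ K s w)
    (hf : ∀ j, ∃ s, 2 ^ j < s ∧ K s (2 ^ j) ≤ f j)
    (hblocks : ∀ q : ℝ, ∃ i, q < 2 ^ i * 2⁻¹ ^ f (i + 1)) (q : ℝ) :
    ∃ n, q < ∑ s ∈ range n, stageCostR (cKs K) (enumeration K f) s := by
  obtain ⟨i, hi⟩ := hblocks q
  obtain ⟨N, hN⟩ := exists_le_count hmono hf (2 ^ (i + 1))
  refine ⟨N + 1, ?_⟩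
  calc q < 2 ^ i * 2⁻¹ ^ f (i + 1) := hi
    _ = ∑ m ∈ Ico (2 ^ i) (2 ^ (i + 1)), weight f m := (sum_weight_Ico_two_pow i).symm
    _ ≤ ∑ m ∈ range (count K f N), weight f m :=
        sum_le_sum_of_subset_of_nonneg
          (fun m hm => by simp only [mem_Ico, mem_range] at hm ⊢; omega)
          fun _ _ _ => pow_nonneg (by norm_num) _
    _ ≤ _ := sum_weight_le_sum_stageCostR N

end SlowEnumeration

theorem exists_lt_two_pow_mul_inv_two_pow_log (C : ℕ) (q : ℝ) :
    ∃ i, q < 2 ^ i * 2⁻¹ ^ (2 * Nat.log 2 (i + 1) + C) := by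
  obtain ⟨n, hn⟩ := exists_nat_gt q
  set k := n + C + 9
  have hk : 2 ^ k = 4 * 2 ^ (n + C + 7) := by rw [show k = n + C + 7 + 2 by omega, pow_add]; ring
  have hlarge : n + C + 7 < 2 ^ (n + C + 7) := Nat.lt_two_pow_self
  -- so `2 ^ k - 1 ≥ n + (2 * k + C)`, with `i + 1 = 2 ^ k` and `log₂ (i + 1) = k`
  refine ⟨2 ^ k - 1, ?_⟩
  rw [Nat.sub_add_cancel Nat.one_le_two_pow, Nat.log_pow one_lt_two, inv_pow,
    ← pow_sub₀ 2 two_ne_zero (by omega)]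
  calc q < n := hn
    _ < 2 ^ n := by exact_mod_cast Nat.lt_two_pow_self
    _ ≤ 2 ^ (2 ^ k - 1 - (2 * k + C)) := pow_le_pow_right₀ one_le_two (by omega)

open SlowEnumeration

/-- There is a computable enumeration of `ℕ` in order (each stage
an initial segment of `ℕ`) whose total `c_K`-cost is infinite.  Here
`K : ℕ → ℕ → ℕ` is the stage-wise prefix-free complexity: computable,
non-increasing in the stage (on its domain `w < s`), and satisfying
`K(2^j) ≤ 2 log j + O(1)`. -/
theorem stmt5 (K : ℕ → ℕ → ℕ) (hK : Computable₂ K)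
    (hmono : ∀ s w, w < s → K (s + 1) w ≤ K s w)
    (hgrow : ∃ C, ∀ j, ∃ s, 2 ^ j < s ∧ K s (2 ^ j) ≤ 2 * Nat.log 2 j + C) :
    ∃ A : ℕ → ℕ → Bool, Computable₂ A ∧
      (∀ s, ∃ n, ∀ x, A s x = decide (x < n)) ∧
      (∀ s x, A s x = true → A (s + 1) x = true) ∧
      (∀ x, ∃ N, ∀ s, N ≤ s → A s x = true) ∧
      ∀ q : ℝ, ∃ n, q < ∑ s ∈ Finset.range n, stageCostR (cKs K) A s := by
  obtain ⟨C, hC⟩ := hgrow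
  set f := fun j => 2 * Nat.log 2 j + C
  have hf : Computable f := (Primrec.nat_add.comp (Primrec.nat_double.comp
    (Primrec.nat_log.comp (Primrec.const 2) Primrec.id)) (Primrec.const C)).to_comp
  exact ⟨enumeration K f, computable_enumeration hK hf, fun s => ⟨count K f s, fun _ => rfl⟩,
    fun _ _ => enumeration_succ_of_eq_true, enumeration_eventually_true hmono hC,
    sum_stageCostR_unbounded hmono hC (exists_lt_two_pow_mul_inv_two_pow_log C)⟩
end

section
/- Let c be a monotonic cost function. If B obeys c and A = Γ^B via a Turing reduction Γ in which every oracle query on input x is at most x (A ≤_ibT B), then A obeys c. -/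
/-!
Take a computable approximation `(B_s)` of `B` of finite `c`-cost and set
`A_s(x) = Γ^{B_s ↾ (x+1)}(x)` for `x ≤ s`. Because the reduction only queries the oracle
below `x + 1`, a change of `A_s` at `x` forces a change of `B_s` at some `y ≤ x`, and since `c`
is non-increasing in its first argument the stage cost of `(A_s)` never exceeds that of `(B_s)`.
-/

open Filter

theorem Computable.list_map_range {α σ : Type*} [Primcodable α] [Primcodable σ]
    {f : α → ℕ → σ} (hf : Computable₂ f) :
    Computable₂ fun a n => (List.range n).map (f a) := by
  have hrec := Computable.nat_rec (f := fun p : α × ℕ => p.2) (g := fun _ => ([] : List σ))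
    (h := fun p yl => yl.2 ++ [f p.1 yl.1]) Computable.snd (Computable.const [])
    (Computable.list_concat.comp (Computable.snd.comp Computable.snd)
      (hf.comp (Computable.fst.comp Computable.fst) (Computable.fst.comp Computable.snd))).to₂
  refine Computable₂.mk (hrec.of_eq fun p => ?_)
  induction p.2 with
  | zero => rfl
  | succ n ih => simp only [ih, List.range_succ, List.map_append, List.map_singleton]

theorem MonotonicCF.antitone {c : ℕ → ℕ → ℚ} (hm : MonotonicCF c) (s : ℕ) :
    Antitone (c · s) :=
  antitone_nat_of_succ_le (hm.1 · s)

theorem stageCost_le_stageCost {c : ℕ → ℕ → ℚ} (hanti : ∀ s, Antitone (c · s))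
    (hnonneg : ∀ x s, 0 ≤ c x s) {A B : ℕ → ℕ → Bool} {s : ℕ}
    (hchange : ∀ x < s, A (s - 1) x ≠ A s x → ∃ y ≤ x, B (s - 1) y ≠ B s y) :
    stageCost c A s ≤ stageCost c B s := by
  unfold stageCost
  by_cases hA : ∃ x, x < s ∧ A (s - 1) x ≠ A s x
  · obtain ⟨hxs, hx⟩ := Nat.find_spec hA
    obtain ⟨y, hyx, hy⟩ := hchange _ hxs hx
    have hB : ∃ y, y < s ∧ B (s - 1) y ≠ B s y := ⟨y, hyx.trans_lt hxs, hy⟩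
    rw [dif_pos hA, dif_pos hB]
    exact hanti s ((Nat.find_min' hB ⟨hyx.trans_lt hxs, hy⟩).trans hyx)
  · rw [dif_neg hA]
    split_ifs
    exacts [hnonneg _ _, le_rfl]

theorem ObeysWith.of_stageCost_le {c : ℕ → ℕ → ℚ} {A B : ℕ → ℕ → Bool} {q : ℚ}
    (hB : ObeysWith c B q) (hle : ∀ s, stageCost c A s ≤ stageCost c B s) :
    ObeysWith c A q :=
  fun n => (Finset.sum_le_sum fun s _ => hle s).trans (hB n)

/-- The cut-off at `x ≤ s` makes each stage a finite set. -/
def ibtApprox (F : List Bool × ℕ → Bool) (B : ℕ → ℕ → Bool) (s x : ℕ) : Bool :=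
  if x ≤ s then F ((List.range (x + 1)).map (B s), x) else false

section ibtApprox

variable {F : List Bool × ℕ → Bool} {B : ℕ → ℕ → Bool}

theorem computable₂_ibtApprox (hF : Computable F) (hB : Computable₂ B) :
    Computable₂ (ibtApprox F B) := by
  have hprefix : Computable fun p : ℕ × ℕ => F ((List.range (p.2 + 1)).map (B p.1), p.2) :=
    hF.comp ((Computable.list_map_range hB).comp Computable.fst
      (Computable.succ.comp Computable.snd) |>.pair Computable.snd)
  have hle : Computable fun p : ℕ × ℕ => decide (p.2 ≤ p.1) :=
    (Primrec.nat_le.comp Primrec.snd Primrec.fst).decide.to_comp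
  refine Computable₂.mk ((Computable.cond hle hprefix (Computable.const false)).of_eq fun p => ?_)
  by_cases h : p.2 ≤ p.1 <;> simp [ibtApprox, h]

theorem ibtApprox_finite (s : ℕ) : Set.Finite {x | ibtApprox F B s x = true} :=
  (Set.finite_Iic s).subset fun x hx =>
    Set.mem_Iic.2 (by_contra fun hxs => by simp [ibtApprox, hxs] at hx)

theorem exists_ne_of_ibtApprox_ne {s x : ℕ} (hxs : x < s)
    (hne : ibtApprox F B (s - 1) x ≠ ibtApprox F B s x) :
    ∃ y ≤ x, B (s - 1) y ≠ B s y := by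
  by_contra! hB
  have hprefix : (List.range (x + 1)).map (B (s - 1)) = (List.range (x + 1)).map (B s) :=
    List.map_congr_left fun y hy => hB y (Nat.lt_succ_iff.mp (List.mem_range.mp hy))
  exact hne (by simp only [ibtApprox, if_pos (Nat.le_sub_one_of_lt hxs), if_pos hxs.le, hprefix])

theorem ibtApprox_eventually_eq {L A : ℕ → Bool} (hB : ∀ y, ∃ N, ∀ s, N ≤ s → B s y = L y)
    (hred : ∀ x, F ((List.range (x + 1)).map L, x) = A x) (x : ℕ) :
    ∃ N, ∀ s, N ≤ s → ibtApprox F B s x = A x := by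
  have hprefix : ∀ᶠ s in atTop, ∀ y ∈ Finset.range (x + 1), B s y = L y :=
    (Finset.eventually_all _).2 fun y _ => eventually_atTop.2 (hB y)
  refine eventually_atTop.1 ((hprefix.and (eventually_ge_atTop x)).mono fun s ⟨hs, hxs⟩ => ?_)
  have : (List.range (x + 1)).map (B s) = (List.range (x + 1)).map L :=
    List.map_congr_left fun y hy => hs y (Finset.mem_range.2 (List.mem_range.1 hy))
  rw [ibtApprox, if_pos hxs, this, hred]

theorem isCompApprox_ibtApprox {L A : ℕ → Bool} (hF : Computable F) (hB : IsCompApprox B L)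
    (hred : ∀ x, F ((List.range (x + 1)).map L, x) = A x) :
    IsCompApprox (ibtApprox F B) A :=
  ⟨computable₂_ibtApprox hF hB.1, ibtApprox_finite, ibtApprox_eventually_eq hB.2.2 hred⟩

end ibtApprox

/-- If `B` obeys a monotonic cost function `c` and `A ≤_ibT B`
(a Turing reduction in which every oracle query on input `x` is at most `x`),
then `A` obeys `c`. -/
theorem stmt10 (c : ℕ → ℕ → ℚ) (hc : IsCostFunction c) (hm : MonotonicCF c)
    (A B : ℕ → Bool) (hB : Obeys c B)
    (F : List Bool × ℕ → Bool) (hF : Computable F)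
    (hred : ∀ x, F ((List.range (x + 1)).map B, x) = A x) :
    Obeys c A := by
  obtain ⟨Bs, hBs, q, hq⟩ := hB
  refine ⟨ibtApprox F Bs, isCompApprox_ibtApprox hF hBs hred, q, hq.of_stageCost_le fun s => ?_⟩
  exact stageCost_le_stageCost hm.antitone hc.2 fun _ => exists_ne_of_ibtApprox_ne
end
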